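/- For every value type v and every MiniJl type τ, the matching relation v ⋖ τ holds if and only if v is an element of the tag interpretation ⟦τ⟧; consequently, matching-based semantic subtyping τ1 ≤sem τ2 holds if and only if ⟦τ1⟧ ⊆ ⟦τ2⟧ (tag-based semantic subtyping). -/
import Mathlib


/-- MiniJl types -/
inductive Ty : Type
  | pair : Ty → Ty → Ty
  | union : Ty → Ty → Ty
  | int : Ty
  | flt : Ty
  | cmplx : Ty
  | str : Ty
  | real : Ty
  | num : Ty
deriving DecidableEq

/-- Value types: concrete nominal types and pairs of value types. -/
inductive ValTy : Ty → Prop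
  | int : ValTy .int
  | flt : ValTy .flt
  | cmplx : ValTy .cmplx
  | str : ValTy .str
  | pair {v1 v2 : Ty} : ValTy v1 → ValTy v2 → ValTy (.pair v1 v2)

/-- Matching relation `v ⋖ τ`. -/
inductive Matches : Ty → Ty → Prop
  | int : Matches .int .int
  | flt : Matches .flt .flt
  | cmplx : Matches .cmplx .cmplx
  | str : Matches .str .str
  | intReal : Matches .int .real
  | fltReal : Matches .flt .real
  | intNum : Matches .int .num
  | fltNum : Matches .flt .num
  | cmplxNum : Matches .cmplx .num
  | pair {v1 v2 t1 t2 : Ty} : Matches v1 t1 → Matches v2 t2 →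
      Matches (.pair v1 v2) (.pair t1 t2)
  | unionL {v t1 t2 : Ty} : Matches v t1 → Matches v (.union t1 t2)
  | unionR {v t1 t2 : Ty} : Matches v t2 → Matches v (.union t1 t2)

/-- Matching-based semantic subtyping. -/
def SemSub (t1 t2 : Ty) : Prop :=
  ∀ v : Ty, ValTy v → Matches v t1 → Matches v t2

/-- Tag interpretation of types as sets of value types. -/
def interp : Ty → Set Ty
  | .int => {.int}
  | .flt => {.flt}
  | .cmplx => {.cmplx}
  | .str => {.str}
  | .real => {.int, .flt}
  | .num => {.int, .flt, .cmplx}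
  | .pair t1 t2 => {v | ∃ v1 ∈ interp t1, ∃ v2 ∈ interp t2, v = .pair v1 v2}
  | .union t1 t2 => interp t1 ∪ interp t2

/-- Declarative subtyping. -/
inductive DeclSub : Ty → Ty → Prop
  | refl (t : Ty) : DeclSub t t
  | trans {t1 t2 t3 : Ty} : DeclSub t1 t2 → DeclSub t2 t3 → DeclSub t1 t3
  | intReal : DeclSub .int .real
  | fltReal : DeclSub .flt .real
  | realNum : DeclSub .real .num
  | cmplxNum : DeclSub .cmplx .num
  | realUnion : DeclSub .real (.union .int .flt)
  | numUnion : DeclSub .num (.union .real .cmplx)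
  | pair {t1 t2 t1' t2' : Ty} : DeclSub t1 t1' → DeclSub t2 t2' →
      DeclSub (.pair t1 t2) (.pair t1' t2')
  | unionL {t1 t2 t' : Ty} : DeclSub t1 t' → DeclSub t2 t' →
      DeclSub (.union t1 t2) t'
  | unionR1 (t1 t2 : Ty) : DeclSub t1 (.union t1 t2)
  | unionR2 (t1 t2 : Ty) : DeclSub t2 (.union t1 t2)
  | distr1 (t11 t12 t2 : Ty) :
      DeclSub (.pair (.union t11 t12) t2)
        (.union (.pair t11 t2) (.pair t12 t2))
  | distr2 (t1 t21 t22 : Ty) :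
      DeclSub (.pair t1 (.union t21 t22))
        (.union (.pair t1 t21) (.pair t1 t22))

/-- Normal form predicate. -/
inductive InNF : Ty → Prop
  | val {v : Ty} : ValTy v → InNF v
  | union {t1 t2 : Ty} : InNF t1 → InNF t2 → InNF (.union t1 t2)

/-- Union of pairs -/
def unprs : Ty → Ty → Ty
  | .union t11 t12, t2 => .union (unprs t11 t2) (unprs t12 t2)
  | t1, .union t21 t22 => .union (unprs t1 t21) (unprs t1 t22)
  | t1, t2 => .pair t1 t2

/-- Normalization function. -/
def NF : Ty → Ty
  | .int => .int
  | .flt => .flt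
  | .cmplx => .cmplx
  | .str => .str
  | .real => .union .int .flt
  | .num => .union (.union .int .flt) .cmplx
  | .pair t1 t2 => unprs (NF t1) (NF t2)
  | .union t1 t2 => .union (NF t1) (NF t2)

/-- Reductive subtyping. -/
inductive RedSub : Ty → Ty → Prop
  | intRefl : RedSub .int .int
  | fltRefl : RedSub .flt .flt
  | cmplxRefl : RedSub .cmplx .cmplx
  | strRefl : RedSub .str .str
  | intReal : RedSub .int .real
  | fltReal : RedSub .flt .real
  | cmplxNum : RedSub .cmplx .num
  | intNum : RedSub .int .num
  | fltNum : RedSub .flt .num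
  | pair {t1 t2 t1' t2' : Ty} : RedSub t1 t1' → RedSub t2 t2' →
      RedSub (.pair t1 t2) (.pair t1' t2')
  | unionL {t1 t2 t' : Ty} : RedSub t1 t' → RedSub t2 t' →
      RedSub (.union t1 t2) t'
  | unionR1 {t t1' t2' : Ty} : RedSub t t1' → RedSub t (.union t1' t2')
  | unionR2 {t t1' t2' : Ty} : RedSub t t2' → RedSub t (.union t1' t2')
  | nf {t t' : Ty} : RedSub (NF t) t' → RedSub t t'

lemma valTy_of_mem_interp : ∀ t v : Ty, v ∈ interp t → ValTy v := by
  intro t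
  induction t with
  | pair t1 t2 ih1 ih2 =>
    rintro v ⟨v1, h1, v2, h2, rfl⟩
    exact ValTy.pair (ih1 _ h1) (ih2 _ h2)
  | union t1 t2 ih1 ih2 =>
    rintro v (h | h)
    · exact ih1 _ h
    · exact ih2 _ h
  | int => rintro v rfl; exact ValTy.int
  | flt => rintro v rfl; exact ValTy.flt
  | cmplx => rintro v rfl; exact ValTy.cmplx
  | str => rintro v rfl; exact ValTy.str
  | real => rintro v (rfl | rfl); exacts [ValTy.int, ValTy.flt]
  | num => rintro v (rfl | rfl | rfl); exacts [ValTy.int, ValTy.flt, ValTy.cmplx]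

lemma matches_of_mem_interp : ∀ t v : Ty, v ∈ interp t → Matches v t := by
  intro t
  induction t with
  | pair t1 t2 ih1 ih2 =>
    rintro v ⟨v1, h1, v2, h2, rfl⟩
    exact Matches.pair (ih1 _ h1) (ih2 _ h2)
  | union t1 t2 ih1 ih2 =>
    rintro v (h | h)
    · exact Matches.unionL (ih1 _ h)
    · exact Matches.unionR (ih2 _ h)
  | int => rintro v rfl; exact Matches.int
  | flt => rintro v rfl; exact Matches.flt
  | cmplx => rintro v rfl; exact Matches.cmplx
  | str => rintro v rfl; exact Matches.str
  | real => rintro v (rfl | rfl); exacts [Matches.intReal, Matches.fltReal]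
  | num =>
    rintro v (rfl | rfl | rfl)
    exacts [Matches.intNum, Matches.fltNum, Matches.cmplxNum]

lemma mem_interp_of_matches : ∀ {v t : Ty}, Matches v t → v ∈ interp t := by
  intro v t h
  induction h with
  | int => rfl
  | flt => rfl
  | cmplx => rfl
  | str => rfl
  | intReal => exact Or.inl rfl
  | fltReal => exact Or.inr rfl
  | intNum => exact Or.inl rfl
  | fltNum => exact Or.inr (Or.inl rfl)
  | cmplxNum => exact Or.inr (Or.inr rfl)
  | pair _ _ ih1 ih2 => exact ⟨_, ih1, _, ih2, rfl⟩
  | unionL _ ih => exact Or.inl ih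
  | unionR _ ih => exact Or.inr ih

theorem matches_iff_mem_interp_and_semSub_iff_subset :
    (∀ (v t : Ty), ValTy v → (Matches v t ↔ v ∈ interp t)) ∧
    (∀ t1 t2 : Ty, SemSub t1 t2 ↔ interp t1 ⊆ interp t2) := by
  constructor
  · exact fun v t _ => ⟨mem_interp_of_matches, matches_of_mem_interp t v⟩
  · intro t1 t2
    constructor
    · intro h v hv
      exact mem_interp_of_matches
        (h v (valTy_of_mem_interp t1 v hv) (matches_of_mem_interp t1 v hv))
    · intro h v _ hm
      exact matches_of_mem_interp t2 v (h (mem_interp_of_matches hm))
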